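/- arXiv:2106.16063 — 2 statements merged into one kernel-verified Lean document; each statement's English description precedes it below -/
import Mathlib

section
/- If v(r e^{iθ}) = e^{iθ} Σ_{n∈ℤ} w_n(r) e^{inθ} is a finite Fourier sum with smooth coefficients w_n : (0,∞) → ℂ, then the average over θ ∈ [0, 2π] of Re((∂_η v̄)²) at radius r equals Σ_{n∈ℤ} Re[(w̄_n' + (1+n)/r · w̄_n)(w̄_{−n}' + (1−n)/r · w̄_{−n})], where ∂_η = ∂ₓ + i∂_y. -/
open Complex

/-- Fourier splitting of the anisotropic term: for
`v(r e^{iθ}) = e^{iθ} ∑ₙ wₙ(r) e^{inθ}` (finite sum, smooth coefficients),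
the average over `θ ∈ [0, 2π]` of `Re((∂_η v̄)²)` at radius `r` equals
`∑ₙ Re[(w̄ₙ' + (1+n)/r w̄ₙ)(w̄₋ₙ' + (1−n)/r w̄₋ₙ)]`,
where `∂_η v̄ = e^{iθ} ∂_r v̄ + (i e^{iθ}/r) ∂_θ v̄`. -/
theorem fourier_splitting_anisotropic_term
    (s : Finset ℤ) (w : ℤ → ℝ → ℂ) (hw : ∀ n, ContDiff ℝ (⊤ : ℕ∞) (w n))
    (hw0 : ∀ n ∉ s, w n = 0) (r : ℝ) (hr : 0 < r) :
    (2 * Real.pi)⁻¹ * ∫ θ in (0:ℝ)..(2 * Real.pi),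
      (((Complex.exp (Complex.I * θ)
            * deriv (fun ρ : ℝ => (starRingEnd ℂ)
                (Complex.exp (Complex.I * θ)
                  * ∑ n ∈ s, w n ρ * Complex.exp (Complex.I * n * θ))) r
          + Complex.I * Complex.exp (Complex.I * θ) / (r : ℂ)
            * deriv (fun t : ℝ => (starRingEnd ℂ)
                (Complex.exp (Complex.I * t)
                  * ∑ n ∈ s, w n r * Complex.exp (Complex.I * n * t))) θ) ^ 2).re)
    = ∑ n ∈ s,
        (((starRingEnd ℂ) (deriv (w n) r)
            + (1 + (n : ℂ)) / (r : ℂ) * (starRingEnd ℂ) (w n r))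
          * ((starRingEnd ℂ) (deriv (w (-n)) r)
            + (1 - (n : ℂ)) / (r : ℂ) * (starRingEnd ℂ) (w (-n) r))).re := by
  have hrC : (r : ℂ) ≠ 0 := Complex.ofReal_ne_zero.mpr hr.ne'
  set A : ℤ → ℂ := fun n => (starRingEnd ℂ) (deriv (w n) r)
      + (1 + (n : ℂ)) / (r : ℂ) * (starRingEnd ℂ) (w n r) with hA
  have hA0 : ∀ m, m ∉ s → A m = 0 := by
    intro m hm
    have h0 : w m = fun _ => (0 : ℂ) := hw0 m hm
    simp [hA, h0]
  have hdiffw : ∀ n, DifferentiableAt ℝ (w n) r := fun n =>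
    ((hw n).differentiable (by simp)).differentiableAt
  -- Step 1: pointwise identity for the integrand (before squaring)
  have key : ∀ θ : ℝ,
      Complex.exp (Complex.I * θ)
            * deriv (fun ρ : ℝ => (starRingEnd ℂ)
                (Complex.exp (Complex.I * θ)
                  * ∑ n ∈ s, w n ρ * Complex.exp (Complex.I * n * θ))) r
          + Complex.I * Complex.exp (Complex.I * θ) / (r : ℂ)
            * deriv (fun t : ℝ => (starRingEnd ℂ)
                (Complex.exp (Complex.I * t)
                  * ∑ n ∈ s, w n r * Complex.exp (Complex.I * n * t))) θ
        = ∑ n ∈ s, A n * Complex.exp (-(Complex.I * n * θ)) := by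
    intro θ
    have hexp : ∀ c : ℂ, HasDerivAt (fun t : ℝ => Complex.exp (c * (t : ℂ)))
        (c * Complex.exp (c * (θ : ℂ))) θ := by
      intro c
      have h := (((hasDerivAt_id ((θ : ℝ) : ℂ)).const_mul c).cexp).comp_ofReal
      simpa [mul_comm] using h
    -- radial derivative
    have h1 : HasDerivAt (fun ρ : ℝ => Complex.exp (Complex.I * θ)
          * ∑ n ∈ s, w n ρ * Complex.exp (Complex.I * n * θ))
        (Complex.exp (Complex.I * θ)
          * ∑ n ∈ s, deriv (w n) r * Complex.exp (Complex.I * n * θ)) r := by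
      refine HasDerivAt.const_mul _ (HasDerivAt.fun_sum fun n _ => ?_)
      exact ((hdiffw n).hasDerivAt).mul_const _
    have h1' : HasDerivAt (fun ρ : ℝ => (starRingEnd ℂ)
          (Complex.exp (Complex.I * θ)
            * ∑ n ∈ s, w n ρ * Complex.exp (Complex.I * n * θ)))
        ((starRingEnd ℂ) (Complex.exp (Complex.I * θ)
            * ∑ n ∈ s, deriv (w n) r * Complex.exp (Complex.I * n * θ))) r := h1.star
    -- angular derivative
    have h2 : HasDerivAt (fun t : ℝ => Complex.exp (Complex.I * t)
          * ∑ n ∈ s, w n r * Complex.exp (Complex.I * n * t))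
        (Complex.I * Complex.exp (Complex.I * θ)
            * (∑ n ∈ s, w n r * Complex.exp (Complex.I * n * θ))
          + Complex.exp (Complex.I * θ)
            * ∑ n ∈ s, w n r * (Complex.I * n * Complex.exp (Complex.I * n * θ))) θ := by
      refine HasDerivAt.mul (hexp Complex.I) (HasDerivAt.fun_sum fun n _ => ?_)
      have h := (hexp (Complex.I * (n : ℂ))).const_mul (w n r)
      simpa [mul_assoc] using h
    have h2' : HasDerivAt (fun t : ℝ => (starRingEnd ℂ)
          (Complex.exp (Complex.I * t)
            * ∑ n ∈ s, w n r * Complex.exp (Complex.I * n * t)))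
        ((starRingEnd ℂ) (Complex.I * Complex.exp (Complex.I * θ)
            * (∑ n ∈ s, w n r * Complex.exp (Complex.I * n * θ))
          + Complex.exp (Complex.I * θ)
            * ∑ n ∈ s, w n r * (Complex.I * n * Complex.exp (Complex.I * n * θ)))) θ :=
      h2.star
    rw [h1'.deriv, h2'.deriv]
    simp only [map_add, map_mul, map_sum, ← Complex.exp_conj, Complex.conj_I,
      Complex.conj_ofReal, map_intCast]
    simp only [Finset.mul_sum, ← Finset.sum_add_distrib]
    refine Finset.sum_congr rfl fun n _ => ?_
    simp only [hA]
    have e1 : Complex.exp (-Complex.I * (θ : ℂ)) = (Complex.exp (Complex.I * θ))⁻¹ := by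
      rw [← Complex.exp_neg]; ring_nf
    have e2 : Complex.exp (-Complex.I * (n : ℂ) * (θ : ℂ))
        = (Complex.exp (Complex.I * n * θ))⁻¹ := by
      rw [← Complex.exp_neg]; ring_nf
    have e3 : Complex.exp (-(Complex.I * (n : ℂ) * (θ : ℂ)))
        = (Complex.exp (Complex.I * n * θ))⁻¹ := by
      rw [← Complex.exp_neg]
    rw [e1, e2, e3]
    have hE : Complex.exp (Complex.I * θ) ≠ 0 := Complex.exp_ne_zero _
    have hEn : Complex.exp (Complex.I * (n : ℂ) * θ) ≠ 0 := Complex.exp_ne_zero _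
    field_simp
    ring_nf
    simp only [Complex.I_sq]
    field_simp
    ring
  simp only [key]
  -- Step 2: the integral of the squared Fourier sum
  have hint : ∀ k : ℤ, (∫ θ in (0:ℝ)..(2 * Real.pi),
      Complex.exp ((-Complex.I * (k : ℂ)) * (θ : ℝ)))
      = if k = 0 then (((2 * Real.pi : ℝ)) : ℂ) else 0 := by
    intro k
    rcases eq_or_ne k 0 with hk | hk
    · simp [hk, Real.pi_pos.le]
    · rw [if_neg hk, integral_exp_mul_complex (by simp [hk, Complex.I_ne_zero])]
      have h2pi : (-Complex.I * (k : ℂ)) * ((2 * Real.pi : ℝ) : ℂ)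
          = ((-k : ℤ) : ℂ) * (2 * (Real.pi : ℂ) * Complex.I) := by push_cast; ring
      rw [h2pi, Complex.exp_int_mul_two_pi_mul_I]
      simp
  have hcont : ∀ n : ℤ, Continuous fun θ : ℝ => A n * Complex.exp (-(Complex.I * n * θ)) := by
    intro n
    fun_prop
  have hGcont : Continuous fun θ : ℝ =>
      (∑ n ∈ s, A n * Complex.exp (-(Complex.I * n * θ))) ^ 2 := by
    exact ((continuous_finset_sum s fun n _ => hcont n).pow 2)
  -- move `re` outside the integral
  have hre : (∫ θ in (0:ℝ)..(2 * Real.pi),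
        ((∑ n ∈ s, A n * Complex.exp (-(Complex.I * n * θ))) ^ 2).re)
      = ((∫ θ in (0:ℝ)..(2 * Real.pi),
        (∑ n ∈ s, A n * Complex.exp (-(Complex.I * n * θ))) ^ 2)).re := by
    simpa using Complex.reCLM.intervalIntegral_comp_comm
      (hGcont.intervalIntegrable (0 : ℝ) (2 * Real.pi))
  rw [hre]
  -- expand the square and integrate term by term
  have hsq : ∀ θ : ℝ, (∑ n ∈ s, A n * Complex.exp (-(Complex.I * n * θ))) ^ 2
      = ∑ n ∈ s, ∑ m ∈ s, A n * A m * Complex.exp ((-Complex.I * ((n : ℂ) + m)) * θ) := by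
    intro θ
    rw [sq, Finset.sum_mul_sum]
    refine Finset.sum_congr rfl fun n _ => Finset.sum_congr rfl fun m _ => ?_
    have harg : -(Complex.I * (n : ℂ) * (θ : ℂ)) + -(Complex.I * (m : ℂ) * (θ : ℂ))
        = (-Complex.I * ((n : ℂ) + (m : ℂ))) * (θ : ℂ) := by ring
    rw [mul_mul_mul_comm, ← Complex.exp_add, harg]
  have hintegral : (∫ θ in (0:ℝ)..(2 * Real.pi),
        (∑ n ∈ s, A n * Complex.exp (-(Complex.I * n * θ))) ^ 2)
      = ∑ n ∈ s, A n * A (-n) * (((2 * Real.pi : ℝ)) : ℂ) := by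
    simp only [hsq]
    rw [intervalIntegral.integral_finset_sum]
    · refine Finset.sum_congr rfl fun n _ => ?_
      rw [intervalIntegral.integral_finset_sum]
      · have : ∀ m ∈ s, (∫ θ in (0:ℝ)..(2 * Real.pi),
            A n * A m * Complex.exp ((-Complex.I * ((n : ℂ) + m)) * (θ : ℝ)))
            = if m = -n then A n * A (-n) * (((2 * Real.pi : ℝ)) : ℂ) else 0 := by
          intro m _
          rw [intervalIntegral.integral_const_mul]
          have hcast : ((n : ℂ) + m) = (((n + m : ℤ) : ℂ)) := by push_cast; ring
          rw [hcast, hint (n + m)]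
          by_cases hm : m = -n
          · subst hm; simp
          · rw [if_neg (by omega), if_neg hm, mul_zero]
        rw [Finset.sum_congr rfl this, Finset.sum_ite_eq' s (-n)
          (fun _ => A n * A (-n) * (((2 * Real.pi : ℝ)) : ℂ))]
        by_cases hns : -n ∈ s
        · rw [if_pos hns]
        · rw [if_neg hns, hA0 (-n) hns]; ring
      · intro m _
        exact (Continuous.intervalIntegrable (by fun_prop) _ _)
    · intro n _
      refine Continuous.intervalIntegrable ?_ _ _
      exact continuous_finset_sum s fun m _ => by fun_prop
  rw [hintegral]
  -- final bookkeeping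
  have hRHS : ∀ n : ℤ, ((starRingEnd ℂ) (deriv (w (-n)) r)
      + (1 - (n : ℂ)) / (r : ℂ) * (starRingEnd ℂ) (w (-n) r)) = A (-n) := by
    intro n
    have hdef : A (-n) = (starRingEnd ℂ) (deriv (w (-n)) r)
        + (1 + ((-n : ℤ) : ℂ)) / (r : ℂ) * (starRingEnd ℂ) (w (-n) r) := rfl
    rw [hdef]
    push_cast
    ring
  simp only [hRHS]
  rw [Complex.re_sum]
  have hpi : (2 * Real.pi) ≠ 0 := by positivity
  rw [Finset.mul_sum]
  refine Finset.sum_congr rfl fun n _ => ?_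
  have hmre : (A n * A (-n) * (((2 * Real.pi : ℝ)) : ℂ)).re
      = (A n * A (-n)).re * (2 * Real.pi) := by
    rw [Complex.mul_re]
    simp
  rw [hmre, mul_comm ((A n * A (-n)).re), ← mul_assoc, inv_mul_cancel₀ hpi, one_mul]
end

section
/- Let f₀ : (0,∞) → ℝ be smooth, positive, solving f₀'' + f₀'/r − f₀/r² = −(1 − f₀²)f₀. Then for every nonzero φ ∈ C_c^∞((0,∞); ℂ), the quadratic form A₀[φ] = ∫₀^∞ [ |φ'|² + |φ|²/r² + 2 f₀²(Re φ)² − (1 − f₀²)|φ|² ] r dr is strictly positive. -/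
open MeasureTheory

set_option maxHeartbeats 1000000

/-- The quadratic form `A₀` of the zeroth Fourier mode of the isotropic second variation. -/
noncomputable def A0 (f₀ : ℝ → ℝ) (φ : ℝ → ℂ) : ℝ :=
  ∫ r in Set.Ioi (0:ℝ),
    (‖deriv φ r‖ ^ 2 + ‖φ r‖ ^ 2 / r ^ 2
      + 2 * (f₀ r) ^ 2 * ((φ r).re) ^ 2
      - (1 - (f₀ r) ^ 2) * ‖φ r‖ ^ 2) * r

/-- Strict positivity of `A₀` on nonzero smooth compactly supported test functions. -/
theorem A0_pos
    (f₀ : ℝ → ℝ)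
    (hf : ∀ r ∈ Set.Ioi (0:ℝ), ContDiffAt ℝ (⊤ : ℕ∞) f₀ r)
    (hpos : ∀ r ∈ Set.Ioi (0:ℝ), 0 < f₀ r)
    (hode : ∀ r ∈ Set.Ioi (0:ℝ),
      deriv (deriv f₀) r + deriv f₀ r / r - f₀ r / r ^ 2 = -(1 - (f₀ r) ^ 2) * f₀ r)
    (φ : ℝ → ℂ) (hφ : ContDiff ℝ (⊤ : ℕ∞) φ) (hφc : HasCompactSupport φ)
    (hφs : tsupport φ ⊆ Set.Ioi 0) (hφne : φ ≠ 0) :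
    0 < A0 f₀ φ := by
  classical
  have normsq : ∀ z : ℂ, ‖z‖^2 = z.re^2 + z.im^2 := by
    intro z; rw [Complex.sq_norm, Complex.normSq_apply]; ring
  -- a point where φ is nonzero
  obtain ⟨r₀, hr₀ne⟩ : ∃ r, φ r ≠ 0 := by
    by_contra hcon; push_neg at hcon; exact hφne (funext hcon)
  have hr₀K : r₀ ∈ tsupport φ := subset_tsupport φ hr₀ne
  have hr₀pos : (0:ℝ) < r₀ := hφs hr₀K
  -- bounds for the support
  have hKcomp : IsCompact (tsupport φ) := hφc
  have hKne : (tsupport φ).Nonempty := ⟨r₀, hr₀K⟩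
  set c : ℝ := sInf (tsupport φ) with hc_def
  set d : ℝ := sSup (tsupport φ) with hd_def
  have hcK : c ∈ tsupport φ := hKcomp.sInf_mem hKne
  have hdK : d ∈ tsupport φ := hKcomp.sSup_mem hKne
  have hcpos : 0 < c := hφs hcK
  have hdpos : 0 < d := hφs hdK
  have hKicc : tsupport φ ⊆ Set.Icc c d := fun x hx =>
    ⟨csInf_le hKcomp.bddBelow hx, le_csSup hKcomp.bddAbove hx⟩
  have hr₀d : r₀ ≤ d := (hKicc hr₀K).2
  -- vanishing off the support
  have hφ0 : ∀ r, r ∉ tsupport φ → φ r = 0 := fun r hr => image_eq_zero_of_notMem_tsupport hr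
  have hdφ0 : ∀ r, r ∉ tsupport φ → deriv φ r = 0 := by
    intro r hr
    by_contra hne
    exact hr (support_deriv_subset (Function.mem_support.2 hne))
  -- smoothness facts
  have hφdiff : Differentiable ℝ φ := hφ.differentiable (by simp)
  have hdφcont : Continuous (deriv φ) := hφ.continuous_deriv (by simp)
  have hφcont : Continuous φ := hφ.continuous
  have hfO : ContDiffOn ℝ (⊤ : ℕ∞) f₀ (Set.Ioi 0) := fun r hr => (hf r hr).contDiffWithinAt
  have hdfO : ContDiffOn ℝ (⊤ : ℕ∞) (deriv f₀) (Set.Ioi 0) := hfO.deriv_of_isOpen isOpen_Ioi (by simp)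
  -- the key auxiliary functions
  set g : ℝ → ℝ := fun r => deriv f₀ r / f₀ r with hg_def
  set u : ℝ → ℝ := fun r => (φ r).re^2 + (φ r).im^2 with hu_def
  set B : ℝ → ℝ := fun r => r * g r * u r with hB_def
  set h : ℝ → ℝ := fun r =>
    (((deriv φ r).re - g r * (φ r).re)^2 + ((deriv φ r).im - g r * (φ r).im)^2
      + 2*(f₀ r)^2*((φ r).re)^2) * r with hh_def
  set Aint : ℝ → ℝ := fun r =>
    (‖deriv φ r‖ ^ 2 + ‖φ r‖ ^ 2 / r ^ 2
      + 2 * (f₀ r) ^ 2 * ((φ r).re) ^ 2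
      - (1 - (f₀ r) ^ 2) * ‖φ r‖ ^ 2) * r with hA_def
  -- the Hardy decomposition, pointwise
  have key : ∀ r ∈ Set.Ioi (0:ℝ), HasDerivAt B (Aint r - h r) r := by
    intro r hr
    have hrpos : (0:ℝ) < r := hr
    have hFpos : 0 < f₀ r := hpos r hr
    have Hφd : HasDerivAt φ (deriv φ r) r := (hφdiff r).hasDerivAt
    have Hp : HasDerivAt (fun s => (φ s).re) ((deriv φ r).re) r :=
      Complex.reCLM.hasFDerivAt.comp_hasDerivAt r Hφd
    have Hq : HasDerivAt (fun s => (φ s).im) ((deriv φ r).im) r :=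
      Complex.imCLM.hasFDerivAt.comp_hasDerivAt r Hφd
    have Hu : HasDerivAt u
        ((2:ℕ)*(φ r).re^1*(deriv φ r).re + (2:ℕ)*(φ r).im^1*(deriv φ r).im) r :=
      (Hp.pow 2).add (Hq.pow 2)
    have Hf1 : HasDerivAt f₀ (deriv f₀ r) r := ((hf r hr).differentiableAt (by simp)).hasDerivAt
    have Hf2 : HasDerivAt (deriv f₀) (deriv (deriv f₀) r) r :=
      (((hdfO.contDiffAt (Ioi_mem_nhds hr)).differentiableAt (by simp))).hasDerivAt
    have Hg : HasDerivAt g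
        ((deriv (deriv f₀) r * f₀ r - deriv f₀ r * deriv f₀ r)/(f₀ r)^2) r :=
      Hf2.div Hf1 hFpos.ne'
    have HB := ((hasDerivAt_id' (x := r)).mul Hg).mul Hu
    refine HB.congr_deriv ?_
    have hode' := hode r hr
    have hF2 : deriv (deriv f₀) r
        = f₀ r/r^2 - deriv f₀ r/r - (1-(f₀ r)^2)*f₀ r := by
      have : deriv (deriv f₀) r = -(1-(f₀ r)^2)*f₀ r - deriv f₀ r / r + f₀ r / r^2 := by
        linarith
      rw [this]; ring
    simp only [hA_def, hh_def, hg_def, hu_def, normsq, hF2, Pi.mul_apply]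
    push_cast
    field_simp
    ring
  have hderivB : ∀ r ∈ Set.Ioi (0:ℝ), deriv B r = Aint r - h r :=
    fun r hr => (key r hr).deriv
  -- continuity facts on Ioi 0
  have hgcont : ContinuousOn g (Set.Ioi 0) :=
    hdfO.continuousOn.div hfO.continuousOn (fun r hr => (hpos r hr).ne')
  have hpcont : Continuous (fun r => (φ r).re) := Complex.continuous_re.comp hφcont
  have hqcont : Continuous (fun r => (φ r).im) := Complex.continuous_im.comp hφcont
  have hp'cont : Continuous (fun r => (deriv φ r).re) := Complex.continuous_re.comp hdφcont
  have hq'cont : Continuous (fun r => (deriv φ r).im) := Complex.continuous_im.comp hdφcont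
  have hhcont : ContinuousOn h (Set.Ioi 0) := by
    apply ContinuousOn.mul _ continuousOn_id
    apply ContinuousOn.add
    apply ContinuousOn.add
    · exact ((hp'cont.continuousOn.sub (hgcont.mul hpcont.continuousOn)).pow 2)
    · exact ((hq'cont.continuousOn.sub (hgcont.mul hqcont.continuousOn)).pow 2)
    · exact (continuousOn_const.mul ((hfO.continuousOn.pow 2))).mul
        (hpcont.continuousOn.pow 2)
  have hAcont : ContinuousOn Aint (Set.Ioi 0) := by
    apply ContinuousOn.mul _ continuousOn_id
    apply ContinuousOn.sub
    apply ContinuousOn.add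
    apply ContinuousOn.add
    · exact ((hdφcont.norm.pow 2)).continuousOn
    · exact ContinuousOn.div ((hφcont.norm.pow 2)).continuousOn (continuousOn_id.pow 2)
        (fun r hr => pow_ne_zero 2 (ne_of_gt hr))
    · exact (continuousOn_const.mul (hfO.continuousOn.pow 2)).mul
        (hpcont.continuousOn.pow 2)
    · exact (continuousOn_const.sub (hfO.continuousOn.pow 2)).mul
        ((hφcont.norm.pow 2)).continuousOn
  have hdBcont : ContinuousOn (deriv B) (Set.Ioi 0) :=
    (hAcont.sub hhcont).congr (fun r hr => hderivB r hr)
  -- vanishing off the support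
  have hh0 : ∀ r, r ∉ tsupport φ → h r = 0 := by
    intro r hr
    simp [hh_def, hφ0 r hr, hdφ0 r hr]
  have hdB0 : ∀ r, r ∉ tsupport φ → deriv B r = 0 := by
    intro r hr
    have hmem : (tsupport φ)ᶜ ∈ nhds r := (isClosed_tsupport φ).isOpen_compl.mem_nhds hr
    have hBeq : B =ᶠ[nhds r] (fun _ => (0:ℝ)) :=
      Filter.eventuallyEq_of_mem hmem (fun x hx => by simp [hB_def, hu_def, hφ0 x hx])
    rw [hBeq.deriv_eq]
    exact deriv_const r 0
  -- integrability on Ioi 0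
  have hint : ∀ F : ℝ → ℝ, ContinuousOn F (Set.Ioi 0) → (∀ r, r ∉ tsupport φ → F r = 0) →
      IntegrableOn F (Set.Ioi 0) := by
    intro F hFc hF0
    have h1 : IntegrableOn F (tsupport φ) := (hFc.mono hφs).integrableOn_compact hKcomp
    have h2 : IntegrableOn F (Set.Ioi 0 \ tsupport φ) := by
      apply (integrableOn_zero (μ := volume)).congr_fun (fun x hx => (hF0 x hx.2).symm)
      exact measurableSet_Ioi.diff (isClosed_tsupport φ).measurableSet
    exact (h1.union h2).mono_set (by
      intro x hx
      by_cases hxK : x ∈ tsupport φ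
      · exact Or.inl hxK
      · exact Or.inr ⟨hx, hxK⟩)
  have hInt_h : IntegrableOn h (Set.Ioi 0) := hint h hhcont hh0
  have hInt_dB : IntegrableOn (deriv B) (Set.Ioi 0) := hint _ hdBcont hdB0
  -- split the integral
  have hA0 : A0 f₀ φ = (∫ r in Set.Ioi (0:ℝ), h r) + ∫ r in Set.Ioi (0:ℝ), deriv B r := by
    have e : A0 f₀ φ = ∫ r in Set.Ioi (0:ℝ), (h r + deriv B r) := by
      refine setIntegral_congr_fun measurableSet_Ioi fun r hr => ?_
      rw [hderivB r hr]; ring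
    rw [e, integral_add hInt_h hInt_dB]
  -- the boundary term vanishes
  have hIB : ∫ r in Set.Ioi (0:ℝ), deriv B r = 0 := by
    have hsub2 : tsupport φ ⊆ Set.Ioc (c/2) (d+1) := fun x hx =>
      ⟨lt_of_lt_of_le (half_lt_self hcpos) (hKicc hx).1, le_trans (hKicc hx).2 (by linarith)⟩
    have e1 : ∫ r in Set.Ioi (0:ℝ), deriv B r = ∫ r, deriv B r :=
      setIntegral_eq_integral_of_forall_compl_eq_zero
        (fun x hx => hdB0 x (fun hk => hx (hφs hk)))
    have e2 : ∫ r, deriv B r = ∫ r in Set.Ioc (c/2) (d+1), deriv B r :=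
      (setIntegral_eq_integral_of_forall_compl_eq_zero
        (fun x hx => hdB0 x (fun hk => hx (hsub2 hk)))).symm
    have hle : c/2 ≤ d+1 := by linarith [(hKicc hcK).2]
    have e3 : ∫ r in Set.Ioc (c/2) (d+1), deriv B r = ∫ r in (c/2)..(d+1), deriv B r :=
      (intervalIntegral.integral_of_le hle).symm
    have hIccIoi : Set.Icc (c/2) (d+1) ⊆ Set.Ioi (0:ℝ) := fun x hx =>
      lt_of_lt_of_le (half_pos hcpos) hx.1
    have e4 : ∫ r in (c/2)..(d+1), deriv B r = B (d+1) - B (c/2) := by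
      apply intervalIntegral.integral_deriv_eq_sub
      · intro x hx
        rw [Set.uIcc_of_le hle] at hx
        exact (key x (hIccIoi hx)).differentiableAt
      · apply ContinuousOn.intervalIntegrable
        rw [Set.uIcc_of_le hle]
        exact hdBcont.mono hIccIoi
    have hBc : B (c/2) = 0 := by
      have hnm : c/2 ∉ tsupport φ := fun hk => by
        have := (hKicc hk).1; linarith [half_lt_self hcpos]
      simp [hB_def, hu_def, hφ0 _ hnm]
    have hBd : B (d+1) = 0 := by
      have hnm : d+1 ∉ tsupport φ := fun hk => by have := (hKicc hk).2; linarith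
      simp [hB_def, hu_def, hφ0 _ hnm]
    rw [e1, e2, e3, e4, hBc, hBd]; ring
  have hA0' : A0 f₀ φ = ∫ r in Set.Ioi (0:ℝ), h r := by rw [hA0, hIB, add_zero]
  -- nonnegativity of h
  have hhnn : ∀ r ∈ Set.Ioi (0:ℝ), 0 ≤ h r := by
    intro r hr
    have : (0:ℝ) < r := hr
    apply mul_nonneg _ this.le
    positivity
  -- there is a point where h is nonzero
  have hex : ∃ r₁, 0 < r₁ ∧ h r₁ ≠ 0 := by
    by_contra hcon
    push_neg at hcon
    -- then ψ = φ / f₀ has zero derivative on Ioi 0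
    have hψ : ∀ r ∈ Set.Ioi (0:ℝ), HasDerivAt (fun s => φ s / ((f₀ s : ℝ) : ℂ)) 0 r := by
      intro r hr
      have hrpos : (0:ℝ) < r := hr
      have hFpos : 0 < f₀ r := hpos r hr
      have hFne : ((f₀ r : ℝ) : ℂ) ≠ 0 := by exact_mod_cast hFpos.ne'
      have Hφd : HasDerivAt φ (deriv φ r) r := (hφdiff r).hasDerivAt
      have Hf1 : HasDerivAt f₀ (deriv f₀ r) r := ((hf r hr).differentiableAt (by simp)).hasDerivAt
      have HfC : HasDerivAt (fun s => ((f₀ s : ℝ) : ℂ)) ((deriv f₀ r : ℝ) : ℂ) r :=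
        Complex.ofRealCLM.hasFDerivAt.comp_hasDerivAt r Hf1
      -- from h r = 0 derive deriv φ r = g r * φ r
      have h0 := hcon r hrpos
      have h0' : ((deriv φ r).re - g r * (φ r).re)^2 + ((deriv φ r).im - g r * (φ r).im)^2
          + 2*(f₀ r)^2*((φ r).re)^2 = 0 := by
        have := mul_eq_zero.1 h0
        rcases this with h' | h'
        · exact h'
        · exact absurd h' hrpos.ne'
      have h1 : (deriv φ r).re = g r * (φ r).re := by
        nlinarith [sq_nonneg ((deriv φ r).im - g r * (φ r).im),
          sq_nonneg (f₀ r * (φ r).re), sq_nonneg ((deriv φ r).re - g r * (φ r).re)]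
      have h2 : (deriv φ r).im = g r * (φ r).im := by
        nlinarith [sq_nonneg ((deriv φ r).im - g r * (φ r).im),
          sq_nonneg (f₀ r * (φ r).re), sq_nonneg ((deriv φ r).re - g r * (φ r).re)]
      have hd : deriv φ r = ((g r : ℝ) : ℂ) * φ r := by
        apply Complex.ext
        · simpa [Complex.mul_re] using h1
        · simpa [Complex.mul_im] using h2
      have Hdiv := Hφd.div HfC hFne
      refine Hdiv.congr_deriv ?_
      rw [hd, hg_def]
      push_cast
      field_simp
      ring
    -- ψ is constant on [r₀, d+1], hence φ r₀ = 0 — contradiction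
    have hconst := constant_of_has_deriv_right_zero
      (f := fun s => φ s / ((f₀ s : ℝ) : ℂ)) (a := r₀) (b := d+1)
      (fun x hx => ((hψ x (lt_of_lt_of_le hr₀pos hx.1)).continuousAt).continuousWithinAt)
      (fun x hx => (hψ x (lt_of_lt_of_le hr₀pos hx.1)).hasDerivWithinAt)
    have h1 := hconst (d+1) ⟨by linarith, le_refl _⟩
    have hd1 : φ (d+1) = 0 := hφ0 _ (fun hk => by have := (hKicc hk).2; linarith)
    have hf₀r₀ : ((f₀ r₀ : ℝ) : ℂ) ≠ 0 := by exact_mod_cast (hpos r₀ hr₀pos).ne'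
    simp only [hd1, zero_div] at h1
    have h2 : φ r₀ / ((f₀ r₀ : ℝ) : ℂ) = 0 := h1.symm
    rw [div_eq_zero_iff] at h2
    exact hr₀ne (h2.resolve_right hf₀r₀)
  obtain ⟨r₁, hr₁pos, hr₁ne⟩ := hex
  -- positive measure of the support of h
  have hca : ContinuousAt h r₁ := hhcont.continuousAt (Ioi_mem_nhds hr₁pos)
  have hev : ∀ᶠ y in nhds r₁, h y ≠ 0 := hca.eventually_ne hr₁ne
  have hmem : {y | h y ≠ 0} ∩ Set.Ioi 0 ∈ nhds r₁ :=
    Filter.inter_mem hev (Ioi_mem_nhds hr₁pos)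
  obtain ⟨ε, hε, hball⟩ := Metric.mem_nhds_iff.1 hmem
  have hμ : 0 < volume (Function.support h ∩ Set.Ioi 0) :=
    lt_of_lt_of_le (Metric.measure_ball_pos volume r₁ hε) (measure_mono hball)
  rw [hA0']
  exact (setIntegral_pos_iff_support_of_nonneg_ae
    ((ae_restrict_iff' measurableSet_Ioi).2 (Filter.Eventually.of_forall hhnn))
    hInt_h).2 hμ
end
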